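/- For every t ∈ (t₀, t_N], with s = t − t₀, the exponentially weighted integral of a dyadic step function has the closed form (1/τ)·∫_{t₀}^{t} e^{(α−t)/τ}·f_A^n(α) dα = Σ_{k=0}^{2ⁿ−1} a_k · e^{−s/τ} · (e^{γmax(s,k)} − e^{γmin(k)}) · 𝟙(γmin(k) < γmax(s,k)), where γmin(k) = k·Δt/(2ⁿ·τ) and γmax(s,k) = min{(k+1)·Δt/(2ⁿ·τ), s/τ}. -/

import Mathlib

open MeasureTheory intervalIntegral

/-- The dyadic step function on `[t₀, tN)` determined by a coefficient vector
`A ∈ ℝ^(2^n)`: it takes the value `A k` on the interval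
`[t₀ + k·Δt/2^n, t₀ + (k+1)·Δt/2^n)` where `Δt = tN - t₀`, and `0` outside `[t₀, tN)`. -/
noncomputable def dyadicStep (t₀ tN : ℝ) (n : ℕ) (A : Fin (2 ^ n) → ℝ) (α : ℝ) : ℝ :=
  ∑ k : Fin (2 ^ n),
    if t₀ + ((k : ℕ) : ℝ) * (tN - t₀) / 2 ^ n ≤ α ∧
        α < t₀ + (((k : ℕ) : ℝ) + 1) * (tN - t₀) / 2 ^ n
    then A k else 0

/-! The step function is a sum of constants times indicators of intervals `[l, r)` lying to the
right of `t₀`. Integrated against any `f` over `[t₀, t]`, such an indicator picks out the interval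
`[l, max l (min r t)]`, which is degenerate exactly when `min r t ≤ l`. For `f α = e^{(α-t)/τ}`
the antiderivative `τ e^{(α-t)/τ}` evaluates each piece, and factoring out `e^{-(t-t₀)/τ}` turns
the endpoints into `γmin(k)` and `γmax(s,k)`. -/

open Set Real

theorem integral_indicator_Ico_of_le {f : ℝ → ℝ} {a b l r : ℝ} (hal : a ≤ l) :
    ∫ x in a..b, (Ico l r).indicator f x = ∫ x in l..max l (min r b), f x := by
  rcases le_or_gt a b with hab | hba
  · have hIoc : Ioc a b ∩ Ioc l r = Ioc l (max l (min r b)) := by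
      rw [Ioc_inter_Ioc, max_eq_right hal, min_comm]
      ext x
      simp only [mem_Ioc, le_max_iff]
      grind
    have hset : (Ioc a b ∩ Ico l r : Set ℝ) =ᵐ[volume] Ioc l (max l (min r b)) :=
      ((ae_eq_refl _).inter Ico_ae_eq_Ioc).trans (.of_eq hIoc)
    rw [integral_of_le hab, setIntegral_indicator measurableSet_Ico, setIntegral_congr_set hset,
      integral_of_le (le_max_left _ _)]
  · have hset : (Ioc b a ∩ Ico l r : Set ℝ) =ᵐ[volume] (∅ : Set ℝ) := by
      refine ((ae_eq_refl _).inter Ico_ae_eq_Ioc).trans (.of_eq ?_)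
      rw [Ioc_inter_Ioc, Ioc_eq_empty (by grind)]
    rw [max_eq_left ((min_le_right r b).trans (hba.le.trans hal)), integral_same,
      integral_symm, integral_of_le hba.le, setIntegral_indicator measurableSet_Ico,
      setIntegral_congr_set hset, setIntegral_empty, neg_zero]

theorem inv_mul_integral_exp_sub_div (a b t τ : ℝ) :
    τ⁻¹ * ∫ x in a..b, exp ((x - t) / τ) = exp ((b - t) / τ) - exp ((a - t) / τ) := by
  simp_rw [sub_div]
  rw [inv_mul_integral_comp_div_sub, integral_exp]

theorem inv_mul_integral_exp_mul_indicator_Ico {τ a b l : ℝ} (hτ : 0 < τ) (hal : a ≤ l)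
    (r c : ℝ) :
    τ⁻¹ * ∫ x in a..b, exp ((x - b) / τ) * (Ico l r).indicator (fun _ => c) x =
      c * exp (-(b - a) / τ) * (exp (min ((r - a) / τ) ((b - a) / τ)) - exp ((l - a) / τ)) *
        if (l - a) / τ < min ((r - a) / τ) ((b - a) / τ) then 1 else 0 := by
  simp_rw [← indicator_mul_right _ fun x => exp ((x - b) / τ)]
  rw [integral_indicator_Ico_of_le hal, intervalIntegral.integral_mul_const, mul_comm _ c,
    mul_left_comm, inv_mul_integral_exp_sub_div, min_div_div_right hτ.le, min_sub_sub_right]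
  simp only [div_lt_div_iff_of_pos_right hτ, sub_lt_sub_iff_right]
  have hshift (x : ℝ) : exp (-(b - a) / τ) * exp ((x - a) / τ) = exp ((x - b) / τ) := by
    rw [← exp_add]
    ring_nf
  split_ifs with hlm
  · rw [max_eq_right hlm.le, ← hshift, ← hshift]
    ring
  · rw [max_eq_left (not_lt.mp hlm), sub_self]
    ring

theorem dyadicStep_eq_sum_indicator (t₀ tN : ℝ) (n : ℕ) (A : Fin (2 ^ n) → ℝ) (α : ℝ) :
    dyadicStep t₀ tN n A α = ∑ k : Fin (2 ^ n),
      (Ico (t₀ + (k : ℕ) * (tN - t₀) / 2 ^ n) (t₀ + ((k : ℕ) + 1) * (tN - t₀) / 2 ^ n)).indicator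
        (fun _ => A k) α := by
  simp only [dyadicStep, indicator_apply, mem_Ico]

theorem exp_weighted_integral_of_dyadicStep_general
    (τ t₀ tN : ℝ) (hτ : 0 < τ) (h : t₀ < tN)
    (n : ℕ) (A : Fin (2 ^ n) → ℝ)
    (t : ℝ) :
    (1 / τ) * ∫ α in t₀..t, Real.exp ((α - t) / τ) * dyadicStep t₀ tN n A α =
    ∑ k : Fin (2 ^ n),
      A k * Real.exp (-(t - t₀) / τ) *
        (Real.exp (min ((((k : ℕ) : ℝ) + 1) * (tN - t₀) / (2 ^ n * τ)) ((t - t₀) / τ)) -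
          Real.exp (((k : ℕ) : ℝ) * (tN - t₀) / (2 ^ n * τ))) *
        (if ((k : ℕ) : ℝ) * (tN - t₀) / (2 ^ n * τ) <
            min ((((k : ℕ) : ℝ) + 1) * (tN - t₀) / (2 ^ n * τ)) ((t - t₀) / τ)
          then 1 else 0) := by
  have hint (l r c : ℝ) : IntervalIntegrable
      (fun α => exp ((α - t) / τ) * (Ico l r).indicator (fun _ => c) α) volume t₀ t := by
    simp_rw [← indicator_mul_right _ fun α => exp ((α - t) / τ)]
    exact intervalIntegrable_iff.2 <|
      (by fun_prop : Continuous _).integrableOn_uIoc.indicator measurableSet_Ico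
  simp_rw [dyadicStep_eq_sum_indicator, Finset.mul_sum]
  rw [integral_finsetSum fun k _ => hint _ _ _, Finset.mul_sum, one_div]
  refine Finset.sum_congr rfl fun k _ => ?_
  have hnode : t₀ ≤ t₀ + (k : ℕ) * (tN - t₀) / 2 ^ n :=
    le_add_of_nonneg_right <|
      div_nonneg (mul_nonneg (Nat.cast_nonneg _) (sub_nonneg.2 h.le)) (by positivity)
  rw [inv_mul_integral_exp_mul_indicator_Ico hτ hnode]
  simp only [add_sub_cancel_left, div_div]

/-- equation (20) of the paper: closed form for the exponentially
weighted integral of a dyadic step function, for any `t ∈ (t₀, t_N]`, with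
`s = t - t₀`, `γmin(k) = k·Δt/(2^n·τ)` and `γmax(s,k) = min{(k+1)·Δt/(2^n·τ), s/τ}`. -/
theorem exp_weighted_integral_of_dyadicStep
    (τ t₀ tN : ℝ) (hτ : 0 < τ) (h : t₀ < tN)
    (n : ℕ) (A : Fin (2 ^ n) → ℝ)
    (t : ℝ) (ht : t ∈ Set.Ioc t₀ tN) :
    (1 / τ) * ∫ α in t₀..t, Real.exp ((α - t) / τ) * dyadicStep t₀ tN n A α =
    ∑ k : Fin (2 ^ n),
      A k * Real.exp (-(t - t₀) / τ) *
        (Real.exp (min ((((k : ℕ) : ℝ) + 1) * (tN - t₀) / (2 ^ n * τ)) ((t - t₀) / τ)) -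
          Real.exp (((k : ℕ) : ℝ) * (tN - t₀) / (2 ^ n * τ))) *
        (if ((k : ℕ) : ℝ) * (tN - t₀) / (2 ^ n * τ) <
            min ((((k : ℕ) : ℝ) + 1) * (tN - t₀) / (2 ^ n * τ)) ((t - t₀) / τ)
          then 1 else 0) :=
  exp_weighted_integral_of_dyadicStep_general τ t₀ tN hτ h n A t
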